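/- arXiv:1507.08568 — 4 statements merged into one kernel-verified Lean document; each statement's English description precedes it below -/
import Mathlib

section
/- Let ρ > 1, set t_ρ = ρ^ρ, A_ρ(t) = t(1 + log⁺ t)^ρ, and X̃_ρ(t) = t/(1 + log⁺(t/t_ρ))^ρ for t ≥ 0. Then for all t ≥ 0, (1 - 1/e)^ρ · t ≤ A_ρ(X̃_ρ(t)) ≤ t·(1 + ρ·log ρ)^ρ. -/
open Real

lemma log_le_div_e {w : ℝ} (hw : 0 < w) : Real.log w ≤ w / Real.exp 1 := by
  have h := Real.log_le_sub_one_of_pos (div_pos hw (Real.exp_pos 1))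
  rw [Real.log_div hw.ne' (Real.exp_pos 1).ne', Real.log_exp] at h
  linarith

theorem stmt2 (ρ : ℝ) (hρ : 1 < ρ) (t : ℝ) (ht : 0 ≤ t) :
    (1 - 1 / Real.exp 1) ^ ρ * t ≤
      (t / (1 + max (Real.log (t / ρ ^ ρ)) 0) ^ ρ) *
        (1 + max (Real.log (t / (1 + max (Real.log (t / ρ ^ ρ)) 0) ^ ρ)) 0) ^ ρ ∧
    (t / (1 + max (Real.log (t / ρ ^ ρ)) 0) ^ ρ) *
        (1 + max (Real.log (t / (1 + max (Real.log (t / ρ ^ ρ)) 0) ^ ρ)) 0) ^ ρ ≤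
      t * (1 + ρ * Real.log ρ) ^ ρ := by
  have hρ0 : 0 < ρ := by linarith
  have hlρ : 0 < Real.log ρ := Real.log_pos hρ
  have hc : 0 < ρ * Real.log ρ := mul_pos hρ0 hlρ
  have htρpos : 0 < ρ ^ ρ := Real.rpow_pos_of_pos hρ0 ρ
  have hlogtρ : Real.log (ρ ^ ρ) = ρ * Real.log ρ := Real.log_rpow hρ0 ρ
  have hexp1 : (1:ℝ) < Real.exp 1 := by
    have := Real.exp_one_gt_d9; linarith
  have h1e : (0:ℝ) < 1 - 1 / Real.exp 1 := by
    rw [sub_pos, div_lt_one (Real.exp_pos 1)]; exact hexp1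
  set L := 1 + max (Real.log (t / ρ ^ ρ)) 0 with hLdef
  have hL1 : (1:ℝ) ≤ L := le_add_of_nonneg_right (le_max_right _ _)
  have hL0 : (0:ℝ) < L := lt_of_lt_of_le one_pos hL1
  have hLρ : (0:ℝ) < L ^ ρ := Real.rpow_pos_of_pos hL0 ρ
  set X := t / L ^ ρ with hXdef
  set M := 1 + max (Real.log X) 0 with hMdef
  have hM1 : (1:ℝ) ≤ M := le_add_of_nonneg_right (le_max_right _ _)
  have hM0 : (0:ℝ) < M := lt_of_lt_of_le one_pos hM1
  clear_value L X M
  have hmid : X * M ^ ρ = t * (M ^ ρ / L ^ ρ) := by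
    rw [hXdef, div_mul_eq_mul_div, mul_div_assoc]
  have hMLρ : M ^ ρ / L ^ ρ = (M / L) ^ ρ := (Real.div_rpow hM0.le hL0.le ρ).symm
  suffices hmain : (1 - 1 / Real.exp 1) ≤ M / L ∧ M / L ≤ 1 + ρ * Real.log ρ by
    constructor
    · rw [hmid, hMLρ, mul_comm]
      exact mul_le_mul_of_nonneg_left
        (Real.rpow_le_rpow h1e.le hmain.1 hρ0.le) ht
    · rw [hmid, hMLρ]
      exact mul_le_mul_of_nonneg_left
        (Real.rpow_le_rpow (by positivity) hmain.2 hρ0.le) ht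
  rcases le_or_gt t (ρ ^ ρ) with hcase | hcase
  · -- t ≤ ρ^ρ
    have hmax0 : max (Real.log (t / ρ ^ ρ)) 0 = 0 :=
      max_eq_right (Real.log_nonpos (by positivity) ((div_le_one htρpos).mpr hcase))
    have hL : L = 1 := by rw [hLdef, hmax0, add_zero]
    have hX : X = t := by rw [hXdef, hL, Real.one_rpow, div_one]
    have hlt : Real.log t ≤ ρ * Real.log ρ := by
      rcases eq_or_lt_of_le ht with h | h
    
      · rw [← h, Real.log_zero]; exact hc.le
      · rw [← hlogtρ]; exact Real.log_le_log h hcase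
    constructor
    · rw [hL, div_one]
      have h01 : 0 < 1 / Real.exp 1 := by positivity
      linarith
    · rw [hL, div_one, hMdef, hX]
      have := max_le hlt hc.le
      linarith
  · -- ρ^ρ < t
    have ht0 : 0 < t := lt_trans htρpos hcase
    have hldiv : Real.log (t / ρ ^ ρ) = Real.log t - ρ * Real.log ρ := by
      rw [Real.log_div ht0.ne' htρpos.ne', hlogtρ]
    have hpos : 0 < Real.log (t / ρ ^ ρ) :=
      Real.log_pos ((one_lt_div htρpos).mpr hcase)
    have hL : L = 1 + (Real.log t - ρ * Real.log ρ) := by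
      rw [hLdef, max_eq_left hpos.le, hldiv]
    have huc : ρ * Real.log ρ < Real.log t := by
      rw [hldiv] at hpos; linarith
    have hlogX : Real.log X = Real.log t - ρ * Real.log L := by
      rw [hXdef, Real.log_div ht0.ne' hLρ.ne', Real.log_rpow hL0]
    have hkey : ρ * Real.log L ≤ L / Real.exp 1 + ρ * Real.log ρ := by
      have h1 := log_le_div_e (div_pos hL0 hρ0)
      rw [Real.log_div hL0.ne' hρ0.ne'] at h1
      have h2 : ρ * (Real.log L - Real.log ρ) ≤ ρ * (L / ρ / Real.exp 1) :=
        mul_le_mul_of_nonneg_left h1 hρ0.le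
      have h3 : ρ * (L / ρ / Real.exp 1) = L / Real.exp 1 := by
        field_simp
      rw [h3] at h2
      linarith
    constructor
    · rw [le_div_iff₀ hL0]
      have hMlog : 1 + Real.log X ≤ M := by
        rw [hMdef]; have := le_max_left (Real.log X) 0; linarith
      have hid : (1 - 1 / Real.exp 1) * L = L - L / Real.exp 1 := by
        field_simp
      have : (1 - 1 / Real.exp 1) * L ≤ 1 + Real.log X := by
        rw [hid, hlogX]
        nlinarith [hkey, hL.ge, hL.le]
      linarith
    · rw [div_le_iff₀ hL0]
      have hlogL : 0 ≤ Real.log L := Real.log_nonneg hL1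
      have h1 : Real.log X ≤ Real.log t := by
        rw [hlogX]; nlinarith
      have h2 : (0:ℝ) ≤ Real.log t := by linarith
      have hMle : M ≤ 1 + Real.log t := by
        rw [hMdef]; have := max_le h1 h2; linarith
      rw [hL]
      nlinarith [mul_nonneg hc.le (sub_nonneg.mpr huc.le)]
end

section
/- Let Φ₀, Φ₁, …, Φ_k be continuous, nonnegative, strictly increasing functions on [0,∞) with Φᵢ(0) = 0 and Φᵢ(t) → ∞ as t → ∞, and suppose Φ₁⁻¹(t)·Φ₂⁻¹(t)⋯Φ_k⁻¹(t) ≤ Φ₀⁻¹(t) for all t ≥ 0. Then for all nonnegative reals x₁, …, x_k one has Φ₀(x₁·x₂⋯x_k) ≤ Φ₁(x₁) + Φ₂(x₂) + ⋯ + Φ_k(x_k). -/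
/-! With `t = ∑ i, Φ i (x i)` every `Φ i (x i)` is at most `t`, so `x i ≤ Ψ i t` because `Φ i`
is strictly increasing. Multiplying, `∏ i, x i ≤ ∏ i, Ψ i t ≤ Ψ0 t`, and applying the monotone `Φ0`
gives `Φ0 (∏ i, x i) ≤ Φ0 (Ψ0 t) = t`. -/

open Finset

theorem StrictMonoOn.le_of_apply_le_of_apply_eq {α β : Type*} [LinearOrder α] [Preorder β]
    {f : α → β} {s : Set α} (hf : StrictMonoOn f s) {x y : α} {t : β} (hx : x ∈ s) (hy : y ∈ s)
    (hfy : f y = t) (hfx : f x ≤ t) : x ≤ y :=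
  (hf.le_iff_le hx hy).mp (hfy ▸ hfx)

theorem apply_prod_le_sum_apply_of_prod_inv_le {ι : Type*} [Fintype ι] {Φ0 Ψ0 : ℝ → ℝ}
    {Φ Ψ : ι → ℝ → ℝ} (hmono0 : MonotoneOn Φ0 (Set.Ici 0))
    (hmono : ∀ i, StrictMonoOn (Φ i) (Set.Ici 0)) (hnn : ∀ i t, 0 ≤ t → 0 ≤ Φ i t)
    (hΨ0 : ∀ t, 0 ≤ t → 0 ≤ Ψ0 t ∧ Φ0 (Ψ0 t) = t)
    (hΨ : ∀ i t, 0 ≤ t → 0 ≤ Ψ i t ∧ Φ i (Ψ i t) = t)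
    (hineq : ∀ t, 0 ≤ t → ∏ i, Ψ i t ≤ Ψ0 t) {x : ι → ℝ} (hx : ∀ i, 0 ≤ x i) :
    Φ0 (∏ i, x i) ≤ ∑ i, Φ i (x i) := by
  set t := ∑ i, Φ i (x i)
  have hterm_nonneg : ∀ i ∈ univ, 0 ≤ Φ i (x i) := fun i _ => hnn i (x i) (hx i)
  have ht : 0 ≤ t := sum_nonneg hterm_nonneg
  have hx_le : ∀ i, x i ≤ Ψ i t := fun i =>
    (hmono i).le_of_apply_le_of_apply_eq (hx i) (hΨ i t ht).1 (hΨ i t ht).2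
      (single_le_sum hterm_nonneg (mem_univ i))
  have hprod : ∏ i, x i ≤ Ψ0 t :=
    (prod_le_prod (fun i _ => hx i) fun i _ => hx_le i).trans (hineq t ht)
  calc Φ0 (∏ i, x i) ≤ Φ0 (Ψ0 t) :=
        hmono0 (prod_nonneg fun i _ => hx i) (hΨ0 t ht).1 hprod
    _ = t := (hΨ0 t ht).2

theorem stmt4_general (k : ℕ) (Φ0 : ℝ → ℝ) (Φ : Fin k → ℝ → ℝ) (Ψ0 : ℝ → ℝ) (Ψ : Fin k → ℝ → ℝ)
    (hmono0 : StrictMonoOn Φ0 (Set.Ici 0))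
    (hmono : ∀ i, StrictMonoOn (Φ i) (Set.Ici 0))
    (hnn : ∀ i t, 0 ≤ t → 0 ≤ Φ i t)
    (hΨ0 : ∀ t, 0 ≤ t → 0 ≤ Ψ0 t ∧ Φ0 (Ψ0 t) = t)
    (hΨ : ∀ i t, 0 ≤ t → 0 ≤ Ψ i t ∧ Φ i (Ψ i t) = t)
    (hineq : ∀ t, 0 ≤ t → (∏ i, Ψ i t) ≤ Ψ0 t) :
    ∀ x : Fin k → ℝ, (∀ i, 0 ≤ x i) → Φ0 (∏ i, x i) ≤ ∑ i, Φ i (x i) := fun _ hx =>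
  apply_prod_le_sum_apply_of_prod_inv_le hmono0.monotoneOn hmono hnn hΨ0 hΨ hineq hx

theorem stmt4 (k : ℕ) (Φ0 : ℝ → ℝ) (Φ : Fin k → ℝ → ℝ) (Ψ0 : ℝ → ℝ) (Ψ : Fin k → ℝ → ℝ)
    (hcont0 : ContinuousOn Φ0 (Set.Ici 0)) (hmono0 : StrictMonoOn Φ0 (Set.Ici 0))
    (hnn0 : ∀ t, 0 ≤ t → 0 ≤ Φ0 t) (h00 : Φ0 0 = 0)
    (htop0 : Filter.Tendsto Φ0 Filter.atTop Filter.atTop)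
    (hcont : ∀ i, ContinuousOn (Φ i) (Set.Ici 0))
    (hmono : ∀ i, StrictMonoOn (Φ i) (Set.Ici 0))
    (hnn : ∀ i t, 0 ≤ t → 0 ≤ Φ i t) (h0 : ∀ i, Φ i 0 = 0)
    (htop : ∀ i, Filter.Tendsto (Φ i) Filter.atTop Filter.atTop)
    (hΨ0 : ∀ t, 0 ≤ t → 0 ≤ Ψ0 t ∧ Φ0 (Ψ0 t) = t)
    (hΨ0' : ∀ x, 0 ≤ x → Ψ0 (Φ0 x) = x)
    (hΨ : ∀ i t, 0 ≤ t → 0 ≤ Ψ i t ∧ Φ i (Ψ i t) = t)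
    (hΨ' : ∀ i x, 0 ≤ x → Ψ i (Φ i x) = x)
    (hineq : ∀ t, 0 ≤ t → (∏ i, Ψ i t) ≤ Ψ0 t) :
    ∀ x : Fin k → ℝ, (∀ i, 0 ≤ x i) → Φ0 (∏ i, x i) ≤ ∑ i, Φ i (x i) :=
  stmt4_general k Φ0 Φ Ψ0 Ψ hmono0 hmono hnn hΨ0 hΨ hineq
end

section
/- For 1 < p' < ∞, 0 < δ < 1, and with X̃_ρ(t) = t/(1 + log⁺(t/ρ^ρ))^ρ for ρ = 1 + δ(p'−1), there is an absolute constant c such that (∫_1^∞ X̃_ρ(t^{p'})/t^{p'} · dt/t)^{1/p'} ≤ c·((p−1)/δ)^{1/p'}, where p is the conjugate exponent of p' (1/p + 1/p' = 1). In particular the integral ∫_1^∞ X̃_ρ(t^{p'}) t^{−p'−1} dt is finite and bounded by c^{p'}·(p−1)/δ. -/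
open MeasureTheory Set Filter Real Topology

lemma aux_ftc (β ρ : ℝ) (hβ : 0 < β) (hρ : 1 < ρ) :
    IntegrableOn (fun t : ℝ => (1 + β * Real.log t) ^ (-ρ) / t) (Set.Ioi 1) ∧
    ∫ t in Set.Ioi (1:ℝ), (1 + β * Real.log t) ^ (-ρ) / t = ((ρ - 1) * β)⁻¹ := by
  set F : ℝ → ℝ := fun t => ((ρ - 1) * β)⁻¹ * (1 - (1 + β * Real.log t) ^ (1 - ρ)) with hF
  have hne : (ρ - 1) * β ≠ 0 := by have : (0:ℝ) < (ρ-1)*β := by nlinarith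
                                   exact this.ne'
  have hderiv : ∀ x ∈ Set.Ici (1:ℝ),
      HasDerivAt F ((1 + β * Real.log x) ^ (-ρ) / x) x := by
    intro x hx
    have hx0 : (0:ℝ) < x := lt_of_lt_of_le one_pos hx
    have hb : (0:ℝ) < 1 + β * Real.log x := by
      have := Real.log_nonneg hx
      nlinarith
    have hg : HasDerivAt (fun y : ℝ => 1 + β * Real.log y) (β * x⁻¹) x :=
      ((Real.hasDerivAt_log hx0.ne').const_mul β).const_add 1
    have hpow : HasDerivAt (fun y : ℝ => y ^ (1 - ρ))
        ((1 - ρ) * (1 + β * Real.log x) ^ (1 - ρ - 1)) (1 + β * Real.log x) :=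
      Real.hasDerivAt_rpow_const (Or.inl hb.ne')
    have hcomp := hpow.comp x hg
    have hfull := (hcomp.const_sub 1).const_mul (((ρ - 1) * β)⁻¹)
    refine HasDerivAt.congr_deriv hfull ?_
    rw [show (1 - ρ - 1) = -ρ by ring]
    have hρne : ρ - 1 ≠ 0 := by linarith
    field_simp
    ring
  have hpos : ∀ x ∈ Set.Ioi (1:ℝ), 0 ≤ (1 + β * Real.log x) ^ (-ρ) / x := by
    intro x hx
    have hx0 : (0:ℝ) < x := lt_trans one_pos hx
    have hb : (0:ℝ) ≤ 1 + β * Real.log x := by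
      have := Real.log_nonneg (le_of_lt hx)
      nlinarith
    positivity
  have hlim : Tendsto F atTop (𝓝 (((ρ - 1) * β)⁻¹)) := by
    have h1 : Tendsto (fun t : ℝ => 1 + β * Real.log t) atTop atTop :=
      tendsto_atTop_add_const_left _ 1 (Real.tendsto_log_atTop.const_mul_atTop hβ)
    have h2 : Tendsto (fun t : ℝ => (1 + β * Real.log t) ^ (1 - ρ)) atTop (𝓝 0) := by
      have := (tendsto_rpow_neg_atTop (by linarith : (0:ℝ) < ρ - 1)).comp h1
      simpa [Function.comp_def, show -(ρ-1) = 1 - ρ by ring] using this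
    have h3 : Tendsto (fun t : ℝ => 1 - (1 + β * Real.log t) ^ (1 - ρ)) atTop
        (𝓝 (1 - 0)) := (tendsto_const_nhds (x := (1:ℝ))).sub h2
    have h4 := h3.const_mul (((ρ - 1) * β)⁻¹)
    norm_num at h4
    have hFe : F = fun k => β⁻¹ * (ρ - 1)⁻¹ * (1 - (1 + β * Real.log k) ^ (1 - ρ)) := by
      funext t; rw [hF, mul_inv]; ring
    rw [hFe, show ((ρ - 1) * β)⁻¹ = β⁻¹ * (ρ - 1)⁻¹ from by rw [mul_inv, mul_comm]]
    exact h4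
  constructor
  · exact integrableOn_Ioi_deriv_of_nonneg' hderiv hpos hlim
  · have := integral_Ioi_of_hasDerivAt_of_nonneg' hderiv hpos hlim
    rw [this, hF]
    simp [Real.one_rpow]

set_option maxHeartbeats 1000000 in
theorem stmt9 : ∃ c : ℝ, 0 < c ∧
    ∀ p p' δ : ℝ, 1 < p' → 0 < δ → δ < 1 → 1 / p + 1 / p' = 1 →
      (∫ t in Set.Ioi (1 : ℝ),
          ((t ^ p') / (1 + max (Real.log ((t ^ p') /
              ((1 + δ * (p' - 1)) ^ (1 + δ * (p' - 1))))) 0) ^ (1 + δ * (p' - 1)))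
            / t ^ p' / t) ^ (1 / p')
        ≤ c * ((p - 1) / δ) ^ (1 / p') ∧
      (∫ t in Set.Ioi (1 : ℝ),
          ((t ^ p') / (1 + max (Real.log ((t ^ p') /
              ((1 + δ * (p' - 1)) ^ (1 + δ * (p' - 1))))) 0) ^ (1 + δ * (p' - 1)))
            * t ^ (-p' - 1))
        ≤ c ^ p' * ((p - 1) / δ) := by
  set c : ℝ := 4 * Real.exp 1 with hc
  have hc0 : (0:ℝ) < c := by positivity
  refine ⟨c, hc0, ?_⟩
  intro p p' δ hp' hδ0 hδ1 hpc
  have hp'0 : (0:ℝ) < p' := lt_trans one_pos hp'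
  set ρ : ℝ := 1 + δ * (p' - 1) with hρdef
  have hρ1 : (1:ℝ) < ρ := by nlinarith
  have hρ0 : (0:ℝ) < ρ := by linarith
  have hρp : ρ ≤ p' := by nlinarith
  set a : ℝ := ρ * Real.log ρ with hadef
  have ha0 : (0:ℝ) ≤ a := mul_nonneg hρ0.le (Real.log_nonneg hρ1.le)
  have ham : a ≤ p' ^ 2 := by
    have hlog := Real.log_le_sub_one_of_pos hρ0
    nlinarith
  set m : ℝ := max a 1 with hmdef
  have hm1 : (1:ℝ) ≤ m := le_max_right _ _
  have ham' : a ≤ m := le_max_left _ _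
  have hmp : m ≤ p' ^ 2 := max_le ham (by nlinarith)
  have hm0 : (0:ℝ) < m := lt_of_lt_of_le one_pos hm1
  set β : ℝ := p' / (2 * m) with hβdef
  have hβ0 : (0:ℝ) < β := by positivity
  set g : ℝ → ℝ := fun t => ((1 + max (Real.log (t ^ p' / ρ ^ ρ)) 0) ^ ρ * t)⁻¹ with hg
  have hDpos : ∀ t : ℝ, (0:ℝ) < (1 + max (Real.log (t ^ p' / ρ ^ ρ)) 0) ^ ρ := by
    intro t
    apply Real.rpow_pos_of_pos
    have : (0:ℝ) ≤ max (Real.log (t ^ p' / ρ ^ ρ)) 0 := le_max_right _ _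
    linarith
  have hEq2 : Set.EqOn (fun t : ℝ =>
      (t ^ p' / (1 + max (Real.log (t ^ p' / ρ ^ ρ)) 0) ^ ρ) * t ^ (-p' - 1)) g
      (Set.Ioi 1) := by
    intro t ht
    have ht0 : (0:ℝ) < t := lt_trans one_pos ht
    have htp : (0:ℝ) < t ^ p' := Real.rpow_pos_of_pos ht0 _
    have h1 : t ^ (-p' - 1) = (t ^ p')⁻¹ * t⁻¹ := by
      rw [show -p' - 1 = -p' + (-1) by ring, Real.rpow_add ht0, Real.rpow_neg ht0.le,
        Real.rpow_neg_one]
    have hD := hDpos t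
    simp only [hg, h1]
    field_simp
  have hEq1 : Set.EqOn (fun t : ℝ =>
      (t ^ p' / (1 + max (Real.log (t ^ p' / ρ ^ ρ)) 0) ^ ρ) / t ^ p' / t) g
      (Set.Ioi 1) := by
    intro t ht
    have ht0 : (0:ℝ) < t := lt_trans one_pos ht
    have htp : (0:ℝ) < t ^ p' := Real.rpow_pos_of_pos ht0 _
    have hD := hDpos t
    simp only [hg]
    field_simp
  have hgnn : ∀ t ∈ Set.Ioi (1:ℝ), 0 ≤ g t := by
    intro t ht
    have ht0 : (0:ℝ) < t := lt_trans one_pos ht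
    have hD := hDpos t
    simp only [hg]
    positivity
  have hgle : ∀ t ∈ Set.Ioi (1:ℝ), g t ≤ 2 ^ ρ * ((1 + β * Real.log t) ^ (-ρ) / t) := by
    intro t ht
    have ht1 : (1:ℝ) < t := ht
    have ht0 : (0:ℝ) < t := lt_trans one_pos ht
    have hu0 : 0 < Real.log t := Real.log_pos ht1
    simp only [hg]
    set u := Real.log t with hu
    have hlogeq : Real.log (t ^ p' / ρ ^ ρ) = p' * u - a := by
      rw [Real.log_div (Real.rpow_pos_of_pos ht0 _).ne' (Real.rpow_pos_of_pos hρ0 _).ne',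
        Real.log_rpow ht0, Real.log_rpow hρ0, hadef]
    set M := max (Real.log (t ^ p' / ρ ^ ρ)) 0 with hM
    have hM0 : (0:ℝ) ≤ M := le_max_right _ _
    have hMge : p' * u - a ≤ M := by rw [hM, hlogeq]; exact le_max_left _ _
    have hβm : β * (2 * m) = p' := by rw [hβdef]; field_simp
    have hkey : 1 + β * u ≤ 2 * (1 + M) := by
      rcases le_or_gt (β * u) 1 with h | h
      · linarith
      · have h2m : 2 * m < p' * u := by
          rw [← hβm]
          nlinarith [mul_lt_mul_of_pos_right h hm0]
        have hβu : β * u * (2 * m) = p' * u := by rw [← hβm]; ring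
        have hβu2 : β * u ≤ p' * u / 2 := by
          nlinarith [mul_nonneg (by linarith : (0:ℝ) ≤ β * u) (by linarith : (0:ℝ) ≤ m - 1)]
        linarith
    have hb1 : (0:ℝ) < 1 + β * u := by positivity
    have hple : (1 + β * u) ^ ρ ≤ 2 ^ ρ * (1 + M) ^ ρ := by
      rw [← Real.mul_rpow (by norm_num) (by linarith)]
      exact Real.rpow_le_rpow (by linarith) hkey hρ0.le
    have hA : (0:ℝ) < (1 + M) ^ ρ := Real.rpow_pos_of_pos (by linarith) _
    have hB : (0:ℝ) < (1 + β * u) ^ ρ := Real.rpow_pos_of_pos hb1 _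
    have h2 : ((1 + M) ^ ρ)⁻¹ ≤ 2 ^ ρ * ((1 + β * u) ^ ρ)⁻¹ := by
      rw [inv_eq_one_div, show (2:ℝ) ^ ρ * ((1 + β * u) ^ ρ)⁻¹ = 2 ^ ρ / (1 + β * u) ^ ρ from
        (div_eq_mul_inv _ _).symm, div_le_div_iff₀ hA hB]
      linarith [hple]
    calc ((1 + M) ^ ρ * t)⁻¹ = ((1 + M) ^ ρ)⁻¹ * t⁻¹ := by rw [mul_inv]
      _ ≤ (2 ^ ρ * ((1 + β * u) ^ ρ)⁻¹) * t⁻¹ :=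
          mul_le_mul_of_nonneg_right h2 (by positivity)
      _ = 2 ^ ρ * ((1 + β * u) ^ (-ρ) / t) := by
          rw [Real.rpow_neg hb1.le, div_eq_mul_inv]; ring
  obtain ⟨hint, hval⟩ := aux_ftc β ρ hβ0 hρ1
  have hIle : ∫ t in Set.Ioi (1:ℝ), g t ≤ 2 ^ ρ * ((ρ - 1) * β)⁻¹ := by
    have h1 : ∫ t in Set.Ioi (1:ℝ), g t ≤
        ∫ t in Set.Ioi (1:ℝ), 2 ^ ρ * ((1 + β * Real.log t) ^ (-ρ) / t) := by
      apply MeasureTheory.integral_mono_of_nonneg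
      · exact (ae_restrict_iff' measurableSet_Ioi).mpr (Filter.Eventually.of_forall hgnn)
      · exact hint.const_mul _
      · exact (ae_restrict_iff' measurableSet_Ioi).mpr (Filter.Eventually.of_forall hgle)
    rwa [MeasureTheory.integral_const_mul, hval] at h1
  -- conjugate exponent arithmetic
  have hp0 : p ≠ 0 := by
    intro h
    rw [h, div_zero, zero_add] at hpc
    have : p' = 1 := by
      field_simp at hpc
      linarith
    linarith
  have hfrac : (p - 1) / δ = (ρ - 1)⁻¹ := by
    have h1 : (p - 1) * (p' - 1) = 1 := by
      field_simp at hpc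
      nlinarith [hpc]
    rw [hρdef]
    have hδp : (0:ℝ) < δ * (p' - 1) := by nlinarith
    have hne1 : 1 + δ * (p' - 1) - 1 ≠ 0 := by linarith
    field_simp
    nlinarith [h1]
  have hfrac0 : 0 ≤ (p - 1) / δ := by
    rw [hfrac]
    have : (0:ℝ) < ρ - 1 := by linarith
    positivity
  have hbound : 2 ^ ρ * ((ρ - 1) * β)⁻¹ ≤ c ^ p' * ((p - 1) / δ) := by
    rw [hfrac, hβdef]
    have e1 : (2:ℝ) ^ ρ ≤ 2 ^ p' := Real.rpow_le_rpow_of_exponent_le one_le_two hρp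
    have e2 : (2:ℝ) ≤ 2 ^ p' := by
      nth_rewrite 1 [← Real.rpow_one 2]
      exact Real.rpow_le_rpow_of_exponent_le one_le_two hp'.le
    have e3 : p' ≤ Real.exp p' := by linarith [Real.add_one_le_exp p']
    have e4 : c ^ p' = 2 ^ p' * 2 ^ p' * Real.exp p' := by
      rw [hc, show (4:ℝ) * Real.exp 1 = 2 * 2 * Real.exp 1 by norm_num,
        Real.mul_rpow (by norm_num) (Real.exp_pos 1).le,
        Real.mul_rpow (by norm_num) (by norm_num), Real.exp_one_rpow]
    have h2ρ0 : (0:ℝ) < 2 ^ ρ := Real.rpow_pos_of_pos two_pos _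
    have h2p0 : (0:ℝ) < (2:ℝ) ^ p' := Real.rpow_pos_of_pos two_pos _
    have hc1 : 2 ^ ρ * (2 * m) / p' ≤ c ^ p' := by
      rw [e4, div_le_iff₀ hp'0]
      have s1 : 2 ^ ρ * (2 * m) ≤ 2 ^ p' * (2 * p' ^ 2) := by nlinarith
      have h5 : 2 * p' ≤ 2 ^ p' * Real.exp p' := by nlinarith [Real.exp_pos p']
      nlinarith [mul_pos h2p0 hp'0, h5, s1]
    have hrw : 2 ^ ρ * ((ρ - 1) * (p' / (2 * m)))⁻¹ = (2 ^ ρ * (2 * m) / p') * (ρ - 1)⁻¹ := by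
      have : ρ - 1 ≠ 0 := by intro h; nlinarith [h]
      field_simp
    rw [hrw]
    exact mul_le_mul_of_nonneg_right hc1 (by
      have : (0:ℝ) < ρ - 1 := by linarith
      positivity)
  have hI0 : 0 ≤ ∫ t in Set.Ioi (1:ℝ), g t :=
    MeasureTheory.setIntegral_nonneg measurableSet_Ioi hgnn
  constructor
  · rw [MeasureTheory.setIntegral_congr_fun measurableSet_Ioi hEq1]
    calc (∫ t in Set.Ioi (1:ℝ), g t) ^ (1 / p')
        ≤ (c ^ p' * ((p - 1) / δ)) ^ (1 / p') :=
          Real.rpow_le_rpow hI0 (le_trans hIle hbound) (by positivity)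
      _ = c * ((p - 1) / δ) ^ (1 / p') := by
          rw [Real.mul_rpow (by positivity) hfrac0, ← Real.rpow_mul hc0.le,
            mul_one_div_cancel hp'0.ne', Real.rpow_one]
  · rw [MeasureTheory.setIntegral_congr_fun measurableSet_Ioi hEq2]
    exact le_trans hIle hbound
end

section
/- Let Φ_ρ(t) = t(1 + log⁺ t)^ρ with ρ > 0, let λ > 0, let Q be a set of finite measure and f integrable on Q satisfying λ ≤ (1/|Q|)∫_Q |f|. Then (|Q|/λ)·‖f‖_{Φ_ρ,Q}' computed via the infimum formulation satisfies (1/λ)|Q|·‖f‖_{L(log L)^ρ,Q} ≤ 2∫_Q Φ_ρ(|f(x)|/λ) dx, where ‖f‖_{L(log L)^ρ,Q} is the Luxemburg norm inf{μ>0 : (1/|Q|)∫_Q Φ_ρ(|f|/μ) ≤ 1}. -/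
open MeasureTheory

noncomputable def lphi (ρ t : ℝ) : ℝ := t * (1 + max (Real.log t) 0) ^ ρ

lemma logp_mono {a b : ℝ} (ha : 0 ≤ a) (h : a ≤ b) :
    max (Real.log a) 0 ≤ max (Real.log b) 0 := by
  rcases eq_or_lt_of_le ha with h0 | h0
  · simp [← h0, Real.log_zero]
  · exact max_le_max (Real.log_le_log h0 h) le_rfl

lemma one_le_base (t : ℝ) : (1:ℝ) ≤ 1 + max (Real.log t) 0 :=
  le_add_of_nonneg_right (le_max_right _ _)

lemma base_nonneg (t : ℝ) : (0:ℝ) ≤ 1 + max (Real.log t) 0 :=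
  le_trans zero_le_one (one_le_base t)

lemma lphi_nonneg {ρ t : ℝ} (ht : 0 ≤ t) : 0 ≤ lphi ρ t :=
  mul_nonneg ht (Real.rpow_nonneg (base_nonneg t) ρ)

lemma le_lphi {ρ t : ℝ} (hρ : 0 ≤ ρ) (ht : 0 ≤ t) : t ≤ lphi ρ t :=
  le_mul_of_one_le_right ht (Real.one_le_rpow (one_le_base t) hρ)

lemma lphi_mono {ρ a b : ℝ} (hρ : 0 ≤ ρ) (ha : 0 ≤ a) (h : a ≤ b) :
    lphi ρ a ≤ lphi ρ b :=
  mul_le_mul h (Real.rpow_le_rpow (base_nonneg a)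
    (by linarith [logp_mono ha h]) hρ) (Real.rpow_nonneg (base_nonneg a) ρ)
    (le_trans ha h)

lemma lphi_div_le {ρ c t : ℝ} (hρ : 0 ≤ ρ) (hc : 1 ≤ c) (ht : 0 ≤ t) :
    lphi ρ (t / c) ≤ lphi ρ t / c := by
  have hc0 : (0:ℝ) < c := lt_of_lt_of_le zero_lt_one hc
  have h1 : max (Real.log (t / c)) 0 ≤ max (Real.log t) 0 :=
    logp_mono (div_nonneg ht hc0.le) (div_le_self ht hc)
  unfold lphi
  rw [div_mul_eq_mul_div]
  rw [div_le_div_iff₀ hc0 hc0]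
  apply mul_le_mul_of_nonneg_right _ hc0.le
  exact mul_le_mul_of_nonneg_left
    (Real.rpow_le_rpow (base_nonneg _) (by linarith) hρ) ht

lemma lphi_scale {ρ c t : ℝ} (hρ : 0 ≤ ρ) (hc : 1 ≤ c) (ht : 0 ≤ t) :
    lphi ρ (c * t) ≤ c * (1 + Real.log c) ^ ρ * lphi ρ t := by
  have hc0 : (0:ℝ) < c := lt_of_lt_of_le zero_lt_one hc
  have hlc : 0 ≤ Real.log c := Real.log_nonneg hc
  rcases eq_or_lt_of_le ht with h0 | h0
  · have : c * t = 0 := by rw [← h0, mul_zero]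
    rw [this]
    simp [lphi]
    positivity
  · have hlogct : max (Real.log (c * t)) 0 ≤ Real.log c + max (Real.log t) 0 := by
      rw [Real.log_mul (ne_of_gt hc0) (ne_of_gt h0)]
      exact max_le (by linarith [le_max_left (Real.log t) 0])
        (by linarith [le_max_right (Real.log t) 0])
    have hbase : 1 + max (Real.log (c * t)) 0 ≤
        (1 + Real.log c) * (1 + max (Real.log t) 0) := by
      nlinarith [le_max_right (Real.log t) 0]
    have hr : (1 + max (Real.log (c * t)) 0) ^ ρ ≤
        (1 + Real.log c) ^ ρ * (1 + max (Real.log t) 0) ^ ρ := by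
      rw [← Real.mul_rpow (by linarith) (base_nonneg t)]
      exact Real.rpow_le_rpow (base_nonneg _) hbase hρ
    calc lphi ρ (c * t) = c * t * (1 + max (Real.log (c * t)) 0) ^ ρ := rfl
      _ ≤ c * t * ((1 + Real.log c) ^ ρ * (1 + max (Real.log t) 0) ^ ρ) := by
          apply mul_le_mul_of_nonneg_left hr (by positivity)
      _ = c * (1 + Real.log c) ^ ρ * lphi ρ t := by unfold lphi; ring

lemma lphi_scale' {ρ c t : ℝ} (hρ : 0 ≤ ρ) (hc : 0 < c) (ht : 0 ≤ t) :
    lphi ρ (c * t) ≤ max 1 (c * (1 + Real.log c) ^ ρ) * lphi ρ t := by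
  rcases le_total c 1 with h | h
  · calc lphi ρ (c * t) ≤ lphi ρ t := lphi_mono hρ (by positivity)
          (by nlinarith)
      _ ≤ _ := le_mul_of_one_le_left (lphi_nonneg ht) (le_max_left _ _)
  · exact le_trans (lphi_scale hρ h ht)
      (mul_le_mul_of_nonneg_right (le_max_right _ _) (lphi_nonneg ht))

lemma lphi_aesm {α} [MeasurableSpace α] {ν : Measure α} {h : α → ℝ} {ρ : ℝ} (hρ : 0 ≤ ρ)
    (hm : AEMeasurable h ν) (μ : ℝ) :
    AEStronglyMeasurable (fun x => lphi ρ (h x / μ)) ν := by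
  have h1 : AEMeasurable (fun x => h x / μ) ν := hm.div_const μ
  have h2 : AEMeasurable (fun x => Real.log (h x / μ)) ν :=
    Real.measurable_log.comp_aemeasurable h1
  have h3 : AEMeasurable (fun x => ((1:ℝ) + max (Real.log (h x / μ)) 0) ^ ρ) ν :=
    (Real.continuous_rpow_const hρ).measurable.comp_aemeasurable
      (aemeasurable_const.add (h2.max aemeasurable_const))
  exact (h1.mul h3).aestronglyMeasurable

lemma lphi_transfer {α} [MeasurableSpace α] {ν : Measure α} {ρ : ℝ} (hρ : 0 ≤ ρ)
    {h : α → ℝ} (hh : ∀ x, 0 ≤ h x) (hm : AEMeasurable h ν) {μ₁ μ₂ : ℝ}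
    (h1 : 0 < μ₁) (h2 : 0 < μ₂)
    (hint : Integrable (fun x => lphi ρ (h x / μ₁)) ν) :
    Integrable (fun x => lphi ρ (h x / μ₂)) ν := by
  set c := μ₁ / μ₂ with hcdef
  have hc : 0 < c := div_pos h1 h2
  have key : ∀ x, lphi ρ (h x / μ₂) ≤
      max 1 (c * (1 + Real.log c) ^ ρ) * lphi ρ (h x / μ₁) := by
    intro x
    have he : h x / μ₂ = c * (h x / μ₁) := by
      rw [hcdef]; field_simp
    rw [he]
    exact lphi_scale' hρ hc (div_nonneg (hh x) h1.le)
  apply Integrable.mono' (hint.const_mul _) (lphi_aesm hρ hm μ₂)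
  filter_upwards with x
  rw [Real.norm_of_nonneg (lphi_nonneg (div_nonneg (hh x) h2.le))]
  exact key x

theorem stmt11 {n : ℕ} (ρ : ℝ) (hρ : 0 < ρ) (lam : ℝ) (hlam : 0 < lam)
    (Q : Set (Fin n → ℝ)) (hQmeas : MeasurableSet Q)
    (hQpos : 0 < volume Q) (hQfin : volume Q < ⊤)
    (f : (Fin n → ℝ) → ℝ) (hf : IntegrableOn f Q volume)
    (hCZ : lam * (volume Q).toReal ≤ ∫ x in Q, |f x|) :
    (1 / lam) * (volume Q).toReal *
        sInf {μ : ℝ | 0 < μ ∧ (volume Q).toReal⁻¹ *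
          ∫ x in Q, (|f x| / μ) * (1 + max (Real.log (|f x| / μ)) 0) ^ ρ ≤ 1}
      ≤ 2 * ∫ x in Q, (|f x| / lam) * (1 + max (Real.log (|f x| / lam)) 0) ^ ρ := by
  have hρ0 : (0:ℝ) ≤ ρ := hρ.le
  have hQr : 0 < (volume Q).toReal := ENNReal.toReal_pos hQpos.ne' hQfin.ne
  have hfa : AEMeasurable (fun x => |f x|) (volume.restrict Q) :=
    continuous_abs.measurable.comp_aemeasurable hf.aestronglyMeasurable.aemeasurable
  show (1 / lam) * (volume Q).toReal *
        sInf {μ : ℝ | 0 < μ ∧ (volume Q).toReal⁻¹ *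
          ∫ x in Q, lphi ρ (|f x| / μ) ≤ 1}
      ≤ 2 * ∫ x in Q, lphi ρ (|f x| / lam)
  set S := {μ : ℝ | 0 < μ ∧ (volume Q).toReal⁻¹ *
          ∫ x in Q, lphi ρ (|f x| / μ) ≤ 1} with hSdef
  by_cases hgi : Integrable (fun x => lphi ρ (|f x| / lam)) (volume.restrict Q)
  · set I := ∫ x in Q, lphi ρ (|f x| / lam) with hIdef
    have hIQ : (volume Q).toReal ≤ I := by
      have hdiv : Integrable (fun x => |f x| / lam) (volume.restrict Q) :=
        hf.abs.div_const lam
      have h1 : ∫ x in Q, |f x| ≤ lam * I := by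
        have heq : ∫ x in Q, |f x| / lam = (∫ x in Q, |f x|) / lam :=
          integral_div lam _
        have h2 : ∫ x in Q, |f x| / lam ≤ I :=
          integral_mono hdiv hgi (fun x => le_lphi hρ0 (by positivity))
        rw [heq] at h2
        calc ∫ x in Q, |f x| = lam * ((∫ x in Q, |f x|) / lam) := by
              field_simp
          _ ≤ lam * I := mul_le_mul_of_nonneg_left h2 hlam.le
      exact le_of_mul_le_mul_left (le_trans hCZ h1) hlam
    have hI0 : 0 < I := lt_of_lt_of_le hQr hIQ
    set c := I / (volume Q).toReal with hcdef
    have hc1 : 1 ≤ c := (one_le_div hQr).mpr hIQ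
    have hc0 : (0:ℝ) < c := lt_of_lt_of_le zero_lt_one hc1
    set μ₀ := lam * c with hμ₀def
    have hμ₀ : 0 < μ₀ := mul_pos hlam hc0
    have hptwise : ∀ x, lphi ρ (|f x| / μ₀) ≤ lphi ρ (|f x| / lam) / c := by
      intro x
      have he : |f x| / μ₀ = |f x| / lam / c := by
        rw [hμ₀def, div_div]
      rw [he]
      exact lphi_div_le hρ0 hc1 (by positivity)
    have hint0 : Integrable (fun x => lphi ρ (|f x| / μ₀)) (volume.restrict Q) := by
      apply Integrable.mono' (hgi.div_const c) (lphi_aesm hρ0 hfa μ₀)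
      filter_upwards with x
      rw [Real.norm_of_nonneg (lphi_nonneg (by positivity))]
      exact hptwise x
    have hIμ₀ : ∫ x in Q, lphi ρ (|f x| / μ₀) ≤ (volume Q).toReal := by
      calc ∫ x in Q, lphi ρ (|f x| / μ₀)
          ≤ ∫ x in Q, lphi ρ (|f x| / lam) / c :=
            integral_mono hint0 (hgi.div_const c) hptwise
        _ = I / c := integral_div c _
        _ = (volume Q).toReal := by
            rw [hcdef]; field_simp
    have hmem : μ₀ ∈ S := by
      refine ⟨hμ₀, ?_⟩
      calc (volume Q).toReal⁻¹ * ∫ x in Q, lphi ρ (|f x| / μ₀)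
          ≤ (volume Q).toReal⁻¹ * (volume Q).toReal :=
            mul_le_mul_of_nonneg_left hIμ₀ (by positivity)
        _ = 1 := inv_mul_cancel₀ hQr.ne'
    have hsinf : sInf S ≤ μ₀ := csInf_le ⟨0, fun y hy => hy.1.le⟩ hmem
    calc (1 / lam) * (volume Q).toReal * sInf S
        ≤ (1 / lam) * (volume Q).toReal * μ₀ :=
          mul_le_mul_of_nonneg_left hsinf (by positivity)
      _ = I := by rw [hμ₀def, hcdef]; field_simp
      _ ≤ 2 * I := by linarith
  · have hzero : ∀ μ : ℝ, 0 < μ → (∫ x in Q, lphi ρ (|f x| / μ)) = 0 := by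
      intro μ hμ
      apply integral_undef
      intro hint
      exact hgi (lphi_transfer hρ0 (fun x => abs_nonneg _) hfa hμ hlam hint)
    have hSeq : S = Set.Ioi 0 := by
      ext μ
      constructor
      · exact fun hμ => hμ.1
      · intro hμ
        refine ⟨hμ, ?_⟩
        rw [hzero μ hμ, mul_zero]
        norm_num
    rw [hSeq, csInf_Ioi, mul_zero, hzero lam hlam, mul_zero]
end
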